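/- arXiv:2412.06390 — 6 statements merged into one kernel-verified Lean document; each statement's English description precedes it below -/
import Mathlib

section
/- Let X be a real-valued integrable random variable, and let τ₁, τ₂ ∈ (0,1) with τ₁ ≤ τ₂. If t₁ is a τ₁-expectile of X and t₂ is a τ₂-expectile of X, then t₁ ≤ t₂. -/
open MeasureTheory

/-- Monotonicity of expectiles in τ. -/
theorem expectile_monotone
    {Ω : Type*} [MeasurableSpace Ω] (μ : Measure Ω) [IsProbabilityMeasure μ]
    (X : Ω → ℝ) (hX : Integrable X μ)
    (G H : ℝ → ℝ)
    (hG : ∀ t, G t = ∫ ω, max (t - X ω) 0 ∂μ)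
    (hH : ∀ t, H t = ∫ ω, max (X ω - t) 0 ∂μ)
    (τ₁ τ₂ : ℝ) (hτ₁ : τ₁ ∈ Set.Ioo (0:ℝ) 1) (hτ₂ : τ₂ ∈ Set.Ioo (0:ℝ) 1)
    (hττ : τ₁ ≤ τ₂) (t₁ t₂ : ℝ)
    (h1 : (1 - τ₁) * G t₁ = τ₁ * H t₁)
    (h2 : (1 - τ₂) * G t₂ = τ₂ * H t₂) :
    t₁ ≤ t₂ := by
  obtain ⟨hτ₁0, hτ₁1⟩ := hτ₁
  obtain ⟨hτ₂0, hτ₂1⟩ := hτ₂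
  by_contra hcon
  push_neg at hcon
  -- integrability
  have intG : ∀ t : ℝ, Integrable (fun ω => max (t - X ω) 0) μ := fun t =>
    ((integrable_const t).sub hX).pos_part
  have intH : ∀ t : ℝ, Integrable (fun ω => max (X ω - t) 0) μ := fun t =>
    (hX.sub (integrable_const t)).pos_part
  -- nonnegativity
  have hGnn : ∀ t, 0 ≤ G t := fun t => by
    rw [hG]; exact integral_nonneg (fun ω => le_max_right _ _)
  have hHnn : ∀ t, 0 ≤ H t := fun t => by
    rw [hH]; exact integral_nonneg (fun ω => le_max_right _ _)
  -- monotonicity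
  have hGmono : G t₂ ≤ G t₁ := by
    rw [hG, hG]
    exact integral_mono (intG t₂) (intG t₁)
      (fun ω => max_le_max (by linarith [hcon] : t₂ - X ω ≤ t₁ - X ω) le_rfl)
  have hHmono : H t₁ ≤ H t₂ := by
    rw [hH, hH]
    exact integral_mono (intH t₁) (intH t₂)
      (fun ω => max_le_max (by linarith [hcon] : X ω - t₁ ≤ X ω - t₂) le_rfl)
  -- G t - H t = t - E[X]
  have hdiff : ∀ t : ℝ, G t - H t = t - ∫ ω, X ω ∂μ := by
    intro t
    rw [hG, hH, ← integral_sub (intG t) (intH t)]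
    have heq : (fun ω => max (t - X ω) 0 - max (X ω - t) 0) = fun ω => t - X ω := by
      funext ω
      have : X ω - t = -(t - X ω) := by ring
      rw [this, max_zero_sub_max_neg_zero_eq_self]
    rw [heq, integral_sub (integrable_const t) hX, integral_const]
    simp
  set m := ∫ ω, X ω ∂μ
  have hd1 : G t₁ - H t₁ = t₁ - m := hdiff t₁
  have hd2 : G t₂ - H t₂ = t₂ - m := hdiff t₂
  -- s = G + H, G = τ s, H = (1-τ) s
  have hg1 : G t₁ = τ₁ * (G t₁ + H t₁) := by linear_combination h1
  have hh1 : H t₁ = (1 - τ₁) * (G t₁ + H t₁) := by linear_combination -h1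
  have hg2 : G t₂ = τ₂ * (G t₂ + H t₂) := by linear_combination h2
  have hh2 : H t₂ = (1 - τ₂) * (G t₂ + H t₂) := by linear_combination -h2
  set s₁ := G t₁ + H t₁ with hs₁
  set s₂ := G t₂ + H t₂ with hs₂
  have hs₁nn : 0 ≤ s₁ := by have := hGnn t₁; have := hHnn t₁; linarith
  have hs₂nn : 0 ≤ s₂ := by have := hGnn t₂; have := hHnn t₂; linarith
  -- s₂ ≤ s₁ : from τ₂ s₂ = G t₂ ≤ G t₁ = τ₁ s₁ ≤ τ₂ s₁
  have h21 : s₂ ≤ s₁ := by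
    nlinarith [mul_nonneg (sub_nonneg.2 hττ) hs₁nn]
  -- s₁ ≤ s₂ : from (1-τ₁) s₁ = H t₁ ≤ H t₂ = (1-τ₂) s₂ ≤ (1-τ₁) s₂
  have h12 : s₁ ≤ s₂ := by
    nlinarith [mul_nonneg (sub_nonneg.2 hττ) hs₂nn]
  have hseq : s₁ = s₂ := le_antisymm h12 h21
  -- strict inequality: G t₁ - H t₁ > G t₂ - H t₂
  have hstrict : G t₂ - H t₂ < G t₁ - H t₁ := by rw [hd1, hd2]; linarith
  rw [hg1, hh1, hg2, hh2, hseq] at hstrict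
  nlinarith [mul_nonneg (sub_nonneg.2 hττ) hs₂nn]
end

section
/- Let X be a real-valued integrable random variable and let α₁, β₁, α₂, β₂ > 0 with α₁/β₁ ≤ α₂/β₂. If t₁ satisfies α₁·H(t₁) = β₁·G(t₁) and t₂ satisfies α₂·H(t₂) = β₂·G(t₂), then t₁ ≤ t₂. -/
open MeasureTheory

/-!
Write `G` and `H` for the lower and upper partial moments. `G` is monotone, `H` is antitone and
nonnegative, and `G t - H t = t - 𝔼[X]` is strictly increasing; together these make
`t ↦ G t - a * H t` strictly increasing for every `a > 0`. The `(α, β)`-expectile is the zero of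
this function for `a = α / β`, and raising `a` can only lower the function, so its zero moves right.
-/

section RealFunctions

variable {G H : ℝ → ℝ}

theorem strictMono_sub_mul_of_strictMono_sub (hG : Monotone G) (hH : Antitone H)
    (hGH : StrictMono (fun t ↦ G t - H t)) {a : ℝ} (ha : 0 < a) :
    StrictMono (fun t ↦ G t - a * H t) := by
  intro s t hst
  have hGst : G s ≤ G t := hG hst.le
  have hHts : H t ≤ H s := hH hst.le
  refine lt_of_le_of_ne (by nlinarith) fun heq ↦ (hGH hst).ne ?_
  have hHeq : H s = H t := by nlinarith
  have hGeq : G s = G t := by nlinarith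
  simp only [hGeq, hHeq]

theorem le_of_eq_mul_of_eq_mul (hG : Monotone G) (hH : Antitone H) (hH₀ : ∀ t, 0 ≤ H t)
    (hGH : StrictMono (fun t ↦ G t - H t)) {a b s t : ℝ} (ha : 0 < a) (hab : a ≤ b)
    (hs : G s = a * H s) (ht : G t = b * H t) : s ≤ t := by
  refine (strictMono_sub_mul_of_strictMono_sub hG hH hGH ha).le_iff_le.mp ?_
  calc G s - a * H s = 0 := by rw [hs, sub_self]
    _ ≤ G t - a * H t := by nlinarith [hH₀ t]

end RealFunctions

section PartialMoments

variable {Ω : Type*} [MeasurableSpace Ω] {μ : Measure Ω} {X : Ω → ℝ}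

theorem monotone_integral_max_sub_zero [IsFiniteMeasure μ] (hX : Integrable X μ) :
    Monotone (fun t ↦ ∫ ω, max (t - X ω) 0 ∂μ) := fun _ _ hst ↦
  integral_mono ((integrable_const _).sub hX).pos_part ((integrable_const _).sub hX).pos_part
    fun _ ↦ max_le_max (by linarith) le_rfl

theorem antitone_integral_max_sub_zero [IsFiniteMeasure μ] (hX : Integrable X μ) :
    Antitone (fun t ↦ ∫ ω, max (X ω - t) 0 ∂μ) := fun _ _ hst ↦
  integral_mono (hX.sub (integrable_const _)).pos_part (hX.sub (integrable_const _)).pos_part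
    fun _ ↦ max_le_max (by linarith) le_rfl

theorem integral_max_sub_zero_sub_integral_max_sub_zero [IsProbabilityMeasure μ]
    (hX : Integrable X μ) (t : ℝ) :
    ∫ ω, max (t - X ω) 0 ∂μ - ∫ ω, max (X ω - t) 0 ∂μ = t - ∫ ω, X ω ∂μ := by
  have hlow : Integrable (fun ω ↦ max (t - X ω) 0) μ := ((integrable_const t).sub hX).pos_part
  have hupp : Integrable (fun ω ↦ max (X ω - t) 0) μ := (hX.sub (integrable_const t)).pos_part
  rw [← integral_sub hlow hupp]
  simp_rw [← neg_sub _ (X _), max_zero_sub_max_neg_zero_eq_self]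
  rw [integral_sub (integrable_const t) hX, integral_const, probReal_univ, one_smul]

end PartialMoments

theorem expectile_monotone_alpha_beta_general
    {Ω : Type*} [MeasurableSpace Ω] (μ : Measure Ω) [IsProbabilityMeasure μ]
    (X : Ω → ℝ) (hX : Integrable X μ)
    (G H : ℝ → ℝ)
    (hG : ∀ t, G t = ∫ ω, max (t - X ω) 0 ∂μ)
    (hH : ∀ t, H t = ∫ ω, max (X ω - t) 0 ∂μ)
    (α₁ β₁ α₂ β₂ : ℝ) (hα₁ : 0 < α₁) (hβ₁ : 0 < β₁) (hβ₂ : 0 < β₂)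
    (hratio : α₁ / β₁ ≤ α₂ / β₂) (t₁ t₂ : ℝ)
    (h1 : α₁ * H t₁ = β₁ * G t₁)
    (h2 : α₂ * H t₂ = β₂ * G t₂) :
    t₁ ≤ t₂ := by
  obtain rfl : G = _ := funext hG
  obtain rfl : H = _ := funext hH
  refine le_of_eq_mul_of_eq_mul (monotone_integral_max_sub_zero hX)
    (antitone_integral_max_sub_zero hX) (fun t ↦ integral_nonneg fun _ ↦ le_max_right _ _)
    ?_ (div_pos hα₁ hβ₁) hratio ?_ ?_
  · simp_rw [integral_max_sub_zero_sub_integral_max_sub_zero hX]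
    exact fun _ _ hst ↦ sub_lt_sub_right hst _
  · rw [div_mul_eq_mul_div, h1, mul_div_cancel_left₀ _ hβ₁.ne']
  · rw [div_mul_eq_mul_div, h2, mul_div_cancel_left₀ _ hβ₂.ne']

/-- Monotonicity of (α,β)-expectiles in the ratio α/β. -/
theorem expectile_monotone_alpha_beta
    {Ω : Type*} [MeasurableSpace Ω] (μ : Measure Ω) [IsProbabilityMeasure μ]
    (X : Ω → ℝ) (hX : Integrable X μ)
    (G H : ℝ → ℝ)
    (hG : ∀ t, G t = ∫ ω, max (t - X ω) 0 ∂μ)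
    (hH : ∀ t, H t = ∫ ω, max (X ω - t) 0 ∂μ)
    (α₁ β₁ α₂ β₂ : ℝ) (hα₁ : 0 < α₁) (hβ₁ : 0 < β₁) (hα₂ : 0 < α₂) (hβ₂ : 0 < β₂)
    (hratio : α₁ / β₁ ≤ α₂ / β₂) (t₁ t₂ : ℝ)
    (h1 : α₁ * H t₁ = β₁ * G t₁)
    (h2 : α₂ * H t₂ = β₂ * G t₂) :
    t₁ ≤ t₂ :=
  expectile_monotone_alpha_beta_general μ X hX G H hG hH α₁ β₁ α₂ β₂ hα₁ hβ₁ hβ₂ hratio t₁ t₂ h1 h2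
end

section
/- Let X be a real-valued square-integrable random variable and let α, β > 0. The expectile-loss risk φ(t) = E[α·(max(X − t, 0))² + β·(max(t − X, 0))²] is differentiable in t, with derivative φ′(t) = 2β·G(t) − 2α·H(t), where G(t) = E[max(t − X, 0)] and H(t) = E[max(X − t, 0)]. -/
/-!
The loss `y ↦ max y 0 ^ 2` is `C¹` with derivative `2 * max y 0`, which grows linearly in `y`.
Since `X` is square integrable, this derivative is dominated near any `t` by the integrable
function `2 * (|X - t| + 1)`, so differentiation under the integral sign applies to each of the
two one-sided squared losses in `φ`; the loss in `t - X` is the loss in `X - t` for `-X` at `-t`.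
-/

open MeasureTheory

theorem hasDerivAt_posPart_sq (y : ℝ) :
    HasDerivAt (fun y : ℝ => max y 0 ^ 2) (2 * max y 0) y := by
  refine hasDerivAt_of_hasDerivAt_of_ne' (x := 0) (f := fun y : ℝ => max y 0 ^ 2)
    (g := fun y => 2 * max y 0) (fun y hy => ?_) (by fun_prop) (by fun_prop) y
  rcases hy.lt_or_gt with hneg | hpos
  · have hzero : (fun y : ℝ => max y 0 ^ 2) =ᶠ[nhds y] fun _ => 0 := by
      filter_upwards [eventually_lt_nhds hneg] with z hz
      simp [max_eq_right hz.le]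
    simpa [max_eq_right hneg.le] using (hasDerivAt_const y (0 : ℝ)).congr_of_eventuallyEq hzero
  · have hsq : (fun y : ℝ => max y 0 ^ 2) =ᶠ[nhds y] fun z => z ^ 2 := by
      filter_upwards [eventually_gt_nhds hpos] with z hz
      simp [max_eq_left hz.le]
    simpa [max_eq_left hpos.le] using (hasDerivAt_pow 2 y).congr_of_eventuallyEq hsq

section PartialMoments

variable {Ω : Type*} [MeasurableSpace Ω] {μ : Measure Ω} [IsFiniteMeasure μ] {X : Ω → ℝ}

theorem MeasureTheory.MemLp.posPart_sub_const {p : ENNReal} (hX : MemLp X p μ) (t : ℝ) :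
    MemLp (fun ω => max (X ω - t) 0) p μ :=
  (hX.sub (memLp_const t)).pos_part

theorem MeasureTheory.MemLp.posPart_const_sub {p : ENNReal} (hX : MemLp X p μ) (t : ℝ) :
    MemLp (fun ω => max (t - X ω) 0) p μ :=
  ((memLp_const t).sub hX).pos_part

theorem hasDerivAt_integral_posPart_sub_const_sq (hX : MemLp X 2 μ) (t : ℝ) :
    HasDerivAt (fun t => ∫ ω, max (X ω - t) 0 ^ 2 ∂μ) (-(2 * ∫ ω, max (X ω - t) 0 ∂μ)) t := by
  have hpos := hX.posPart_sub_const
  have hdom := hasDerivAt_integral_of_dominated_loc_of_deriv_le (μ := μ)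
    (F := fun s ω => max (X ω - s) 0 ^ 2) (F' := fun s ω => -(2 * max (X ω - s) 0))
    (bound := fun ω => 2 * (|X ω - t| + 1)) (Metric.ball_mem_nhds t one_pos)
    (.of_forall fun s => (hpos s).integrable_sq.aestronglyMeasurable) (hpos t).integrable_sq
    (((hpos t).integrable one_le_two).const_mul 2).neg.aestronglyMeasurable ?bound
    ((((hX.integrable one_le_two).sub (integrable_const t)).abs.add (integrable_const 1)).const_mul 2)
    ?deriv
  · simpa only [integral_neg, integral_const_mul] using hdom.2
  case bound =>
    filter_upwards with ω s hs
    have hst := abs_lt.mp (Real.dist_eq s t ▸ Metric.mem_ball.mp hs)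
    have hle : max (X ω - s) 0 ≤ |X ω - t| + 1 :=
      max_le (by linarith [le_abs_self (X ω - t)]) (by positivity)
    rw [norm_neg, Real.norm_of_nonneg (by positivity)]
    linarith
  case deriv =>
    filter_upwards with ω s _
    exact ((hasDerivAt_posPart_sq (X ω - s)).comp s
      ((hasDerivAt_id s).const_sub (X ω))).congr_deriv (by ring)

theorem hasDerivAt_integral_posPart_const_sub_sq (hX : MemLp X 2 μ) (t : ℝ) :
    HasDerivAt (fun t => ∫ ω, max (t - X ω) 0 ^ 2 ∂μ) (2 * ∫ ω, max (t - X ω) 0 ∂μ) t := by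
  have h := (hasDerivAt_integral_posPart_sub_const_sq hX.neg (-t)).comp t (hasDerivAt_neg t)
  simpa only [Function.comp_def, Pi.neg_apply, neg_sub_neg, mul_neg_one, neg_neg] using h

end PartialMoments

theorem expectile_risk_deriv_general
    {Ω : Type*} [MeasurableSpace Ω] (μ : Measure Ω) [IsProbabilityMeasure μ]
    (X : Ω → ℝ) (hX : MemLp X 2 μ)
    (α β : ℝ)
    (G H φ : ℝ → ℝ)
    (hG : ∀ t, G t = ∫ ω, max (t - X ω) 0 ∂μ)
    (hH : ∀ t, H t = ∫ ω, max (X ω - t) 0 ∂μ)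
    (hφ : ∀ t, φ t = ∫ ω, (α * (max (X ω - t) 0) ^ 2 + β * (max (t - X ω) 0) ^ 2) ∂μ) :
    ∀ t : ℝ, HasDerivAt φ (2 * β * G t - 2 * α * H t) t := by
  have hφ_split : φ = fun t =>
      α * ∫ ω, max (X ω - t) 0 ^ 2 ∂μ + β * ∫ ω, max (t - X ω) 0 ^ 2 ∂μ := by
    funext t
    rw [hφ, integral_add ((hX.posPart_sub_const t).integrable_sq.const_mul α)
      ((hX.posPart_const_sub t).integrable_sq.const_mul β),
      integral_const_mul, integral_const_mul]
  intro t
  rw [hφ_split, hG, hH]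
  exact (((hasDerivAt_integral_posPart_sub_const_sq hX t).const_mul α).add
    ((hasDerivAt_integral_posPart_const_sub_sq hX t).const_mul β)).congr_deriv (by ring)

/-- The expectile-loss risk φ is differentiable with
φ′(t) = 2β·G(t) − 2α·H(t). -/
theorem expectile_risk_deriv
    {Ω : Type*} [MeasurableSpace Ω] (μ : Measure Ω) [IsProbabilityMeasure μ]
    (X : Ω → ℝ) (hX : MemLp X 2 μ)
    (α β : ℝ) (hα : 0 < α) (hβ : 0 < β)
    (G H φ : ℝ → ℝ)
    (hG : ∀ t, G t = ∫ ω, max (t - X ω) 0 ∂μ)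
    (hH : ∀ t, H t = ∫ ω, max (X ω - t) 0 ∂μ)
    (hφ : ∀ t, φ t = ∫ ω, (α * (max (X ω - t) 0) ^ 2 + β * (max (t - X ω) 0) ^ 2) ∂μ) :
    ∀ t : ℝ, HasDerivAt φ (2 * β * G t - 2 * α * H t) t :=
  expectile_risk_deriv_general μ X hX α β G H φ hG hH hφ
end

section
/- Let X be a real-valued square-integrable random variable and let α, β > 0. A real number t minimizes the expectile-loss risk φ(t) = E[α·(max(X − t, 0))² + β·(max(t − X, 0))²] over ℝ if and only if t satisfies the (α,β)-expectile equation α·H(t) = β·G(t), where G(t) = E[max(t − X, 0)] and H(t) = E[max(X − t, 0)]. -/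
open MeasureTheory Filter Topology Asymptotics

/-! For fixed `x`, the loss `t ↦ α (x - t)₊² + β (t - x)₊²` has derivative
`2β (t - x)₊ - 2α (x - t)₊`, and the gap between the loss at `s` and its tangent line at `t`
lies between `0` and `max α β (s - t)²`. Integrating in `x = X ω`, the risk `φ` is squeezed
between its tangent line at `t`, of slope `2β G t - 2α H t`, and that line plus a quadratic.
So `φ` is differentiable at `t` with this slope and lies above all its tangents: `t` is a
minimizer iff the slope vanishes. -/

theorem hasDerivAt_of_le_of_le_add_sq {f : ℝ → ℝ} {t d M : ℝ}
    (h_low : ∀ s, f t + d * (s - t) ≤ f s)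
    (h_up : ∀ s, f s ≤ f t + d * (s - t) + M * (s - t) ^ 2) :
    HasDerivAt f d t := by
  refine .of_isLittleO (IsBigO.trans_isLittleO (g := fun s => ‖s - t‖ ^ 2) ?_
    (isLittleO_pow_sub_sub t one_lt_two))
  refine .of_bound |M| (Eventually.of_forall fun s => ?_)
  simp only [Real.norm_eq_abs, smul_eq_mul, abs_pow, sq_abs]
  rw [abs_le]
  constructor <;> nlinarith [h_low s, h_up s, le_abs_self M, sq_nonneg (s - t)]

theorem forall_le_iff_eq_zero_of_le_of_le_add_sq {f : ℝ → ℝ} {t d M : ℝ}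
    (h_low : ∀ s, f t + d * (s - t) ≤ f s)
    (h_up : ∀ s, f s ≤ f t + d * (s - t) + M * (s - t) ^ 2) :
    (∀ s, f t ≤ f s) ↔ d = 0 := by
  refine ⟨fun hmin => ?_, fun hd s => by simpa [hd] using h_low s⟩
  exact IsLocalMin.hasDerivAt_eq_zero (Eventually.of_forall hmin)
    (hasDerivAt_of_le_of_le_add_sq h_low h_up)

def expectileLoss (α β x t : ℝ) : ℝ := α * max (x - t) 0 ^ 2 + β * max (t - x) 0 ^ 2

def expectileLossDeriv (α β x t : ℝ) : ℝ := 2 * β * max (t - x) 0 - 2 * α * max (x - t) 0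

theorem expectileLoss_add_deriv_mul_le {α β : ℝ} (hα : 0 ≤ α) (hβ : 0 ≤ β) (x t s : ℝ) :
    expectileLoss α β x t + expectileLossDeriv α β x t * (s - t) ≤ expectileLoss α β x s := by
  unfold expectileLoss expectileLossDeriv
  rcases le_total x t with hxt | hxt <;> rcases le_total x s with hxs | hxs <;>
    simp only [max_eq_left, max_eq_right, sub_nonpos, sub_nonneg, hxt, hxs] <;>
    nlinarith [mul_nonneg (mul_nonneg hα (sub_nonneg.2 hxt)) (sub_nonneg.2 hxs),
      mul_nonneg (mul_nonneg hβ (sub_nonneg.2 hxt)) (sub_nonneg.2 hxs),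
      mul_nonneg hα (sq_nonneg (s - t)), mul_nonneg hβ (sq_nonneg (s - t))]

theorem expectileLoss_le_add_deriv_mul_add_sq (α β x t s : ℝ) :
    expectileLoss α β x s ≤ expectileLoss α β x t + expectileLossDeriv α β x t * (s - t)
      + max α β * (s - t) ^ 2 := by
  unfold expectileLoss expectileLossDeriv
  have ha := le_max_left α β
  have hb := le_max_right α β
  rcases le_total x t with hxt | hxt <;> rcases le_total x s with hxs | hxs <;>
    simp only [max_eq_left, max_eq_right, sub_nonpos, sub_nonneg, hxt, hxs] <;>
    nlinarith [mul_nonneg (mul_nonneg (sub_nonneg.2 ha) (sub_nonneg.2 hxt)) (sub_nonneg.2 hxs),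
      mul_nonneg (mul_nonneg (sub_nonneg.2 hb) (sub_nonneg.2 hxt)) (sub_nonneg.2 hxs),
      mul_nonneg (sub_nonneg.2 ha) (sq_nonneg (s - t)),
      mul_nonneg (sub_nonneg.2 hb) (sq_nonneg (s - t)),
      mul_nonneg (sub_nonneg.2 ha) (sq_nonneg (x - s)),
      mul_nonneg (sub_nonneg.2 hb) (sq_nonneg (x - t))]

section Integrated

variable {Ω : Type*} [MeasurableSpace Ω] {μ : Measure Ω} [IsFiniteMeasure μ] {X : Ω → ℝ}

theorem MeasureTheory.MemLp.max_sub_const_zero (hX : MemLp X 2 μ) (t : ℝ) :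
    MemLp (fun ω => max (X ω - t) 0) 2 μ :=
  (hX.sub (memLp_const t)).sup (memLp_const 0)

theorem MeasureTheory.MemLp.max_const_sub_zero (hX : MemLp X 2 μ) (t : ℝ) :
    MemLp (fun ω => max (t - X ω) 0) 2 μ :=
  ((memLp_const t).sub hX).sup (memLp_const 0)

theorem integrable_expectileLoss (hX : MemLp X 2 μ) (α β t : ℝ) :
    Integrable (fun ω => expectileLoss α β (X ω) t) μ :=
  ((hX.max_sub_const_zero t).integrable_sq.const_mul α).add
    ((hX.max_const_sub_zero t).integrable_sq.const_mul β)

theorem integrable_expectileLossDeriv (hX : MemLp X 2 μ) (α β t : ℝ) :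
    Integrable (fun ω => expectileLossDeriv α β (X ω) t) μ :=
  (((hX.max_const_sub_zero t).integrable one_le_two).const_mul _).sub
    (((hX.max_sub_const_zero t).integrable one_le_two).const_mul _)

theorem integral_expectileLossDeriv (hX : MemLp X 2 μ) (α β t : ℝ) :
    ∫ ω, expectileLossDeriv α β (X ω) t ∂μ
      = 2 * β * ∫ ω, max (t - X ω) 0 ∂μ - 2 * α * ∫ ω, max (X ω - t) 0 ∂μ := by
  rw [← integral_const_mul, ← integral_const_mul, ← integral_sub]
  · rfl
  · exact ((hX.max_const_sub_zero t).integrable one_le_two).const_mul _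
  · exact ((hX.max_sub_const_zero t).integrable one_le_two).const_mul _

theorem integrable_expectileLoss_add_deriv_mul (hX : MemLp X 2 μ) (α β t c : ℝ) :
    Integrable (fun ω => expectileLoss α β (X ω) t + expectileLossDeriv α β (X ω) t * c) μ :=
  (integrable_expectileLoss hX α β t).add ((integrable_expectileLossDeriv hX α β t).mul_const c)

theorem integral_expectileLoss_add_deriv_mul (hX : MemLp X 2 μ) (α β t c : ℝ) :
    ∫ ω, expectileLoss α β (X ω) t + expectileLossDeriv α β (X ω) t * c ∂μ
      = ∫ ω, expectileLoss α β (X ω) t ∂μ + (∫ ω, expectileLossDeriv α β (X ω) t ∂μ) * c := by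
  rw [integral_add (integrable_expectileLoss hX α β t)
    ((integrable_expectileLossDeriv hX α β t).mul_const c), integral_mul_const]

theorem integral_expectileLoss_add_deriv_mul_le (hX : MemLp X 2 μ) {α β : ℝ}
    (hα : 0 ≤ α) (hβ : 0 ≤ β) (t s : ℝ) :
    ∫ ω, expectileLoss α β (X ω) t ∂μ + (∫ ω, expectileLossDeriv α β (X ω) t ∂μ) * (s - t)
      ≤ ∫ ω, expectileLoss α β (X ω) s ∂μ := by
  rw [← integral_expectileLoss_add_deriv_mul hX]
  exact integral_mono (integrable_expectileLoss_add_deriv_mul hX α β t _)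
    (integrable_expectileLoss hX α β s) fun ω => expectileLoss_add_deriv_mul_le hα hβ (X ω) t s

theorem integral_expectileLoss_le_add_deriv_mul_add_sq (hX : MemLp X 2 μ) (α β t s : ℝ) :
    ∫ ω, expectileLoss α β (X ω) s ∂μ
      ≤ ∫ ω, expectileLoss α β (X ω) t ∂μ + (∫ ω, expectileLossDeriv α β (X ω) t ∂μ) * (s - t)
        + μ.real Set.univ * max α β * (s - t) ^ 2 := by
  have h_int := integrable_expectileLoss_add_deriv_mul hX α β t (s - t)
  calc ∫ ω, expectileLoss α β (X ω) s ∂μ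
      ≤ ∫ ω, expectileLoss α β (X ω) t + expectileLossDeriv α β (X ω) t * (s - t)
          + max α β * (s - t) ^ 2 ∂μ :=
        integral_mono (integrable_expectileLoss hX α β s) (h_int.add (integrable_const _))
          fun ω => expectileLoss_le_add_deriv_mul_add_sq α β (X ω) t s
    _ = _ := by
      rw [integral_add h_int (integrable_const _), integral_expectileLoss_add_deriv_mul hX,
        integral_const, smul_eq_mul, mul_assoc]

end Integrated

/-- t minimizes the expectile-loss risk φ iff α·H(t) = β·G(t). -/
theorem expectile_risk_min_iff
    {Ω : Type*} [MeasurableSpace Ω] (μ : Measure Ω) [IsProbabilityMeasure μ]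
    (X : Ω → ℝ) (hX : MemLp X 2 μ)
    (α β : ℝ) (hα : 0 < α) (hβ : 0 < β)
    (G H φ : ℝ → ℝ)
    (hG : ∀ t, G t = ∫ ω, max (t - X ω) 0 ∂μ)
    (hH : ∀ t, H t = ∫ ω, max (X ω - t) 0 ∂μ)
    (hφ : ∀ t, φ t = ∫ ω, (α * (max (X ω - t) 0) ^ 2 + β * (max (t - X ω) 0) ^ 2) ∂μ) :
    ∀ t : ℝ, (∀ s : ℝ, φ t ≤ φ s) ↔ α * H t = β * G t := by
  obtain rfl : φ = fun t => ∫ ω, expectileLoss α β (X ω) t ∂μ := funext hφ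
  intro t
  rw [forall_le_iff_eq_zero_of_le_of_le_add_sq
    (integral_expectileLoss_add_deriv_mul_le hX hα.le hβ.le t)
    (integral_expectileLoss_le_add_deriv_mul_add_sq hX α β t),
    integral_expectileLossDeriv hX, ← hG, ← hH]
  constructor <;> intro h <;> linarith
end

section
/- Let X be a real-valued integrable random variable and τ ∈ (0,1). There exists a unique real number t such that (1 − τ)·G(t) = τ·H(t), where G(t) = E[max(t − X, 0)] and H(t) = E[max(X − t, 0)]; i.e., the τ-expectile of X exists and is unique. -/
open MeasureTheory

/-- The τ-expectile of an integrable random variable exists and is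
unique. -/
theorem expectile_exists_unique
    {Ω : Type*} [MeasurableSpace Ω] (μ : Measure Ω) [IsProbabilityMeasure μ]
    (X : Ω → ℝ) (hX : Integrable X μ)
    (G H : ℝ → ℝ)
    (hG : ∀ t, G t = ∫ ω, max (t - X ω) 0 ∂μ)
    (hH : ∀ t, H t = ∫ ω, max (X ω - t) 0 ∂μ)
    (τ : ℝ) (hτ : τ ∈ Set.Ioo (0:ℝ) 1) :
    ∃! t : ℝ, (1 - τ) * G t = τ * H t := by
  obtain ⟨hτ0, hτ1⟩ := hτ
  -- integrability
  have intG : ∀ t : ℝ, Integrable (fun ω => max (t - X ω) 0) μ := fun t =>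
    ((integrable_const t).sub hX).pos_part
  have intH : ∀ t : ℝ, Integrable (fun ω => max (X ω - t) 0) μ := fun t =>
    (hX.sub (integrable_const t)).pos_part
  -- G t - H t = t - E X
  have GsubH : ∀ t : ℝ, G t - H t = t - ∫ ω, X ω ∂μ := by
    intro t
    rw [hG, hH, ← integral_sub (intG t) (intH t)]
    have : (fun ω => max (t - X ω) 0 - max (X ω - t) 0) = fun ω => t - X ω := by
      funext ω
      have h : X ω - t = -(t - X ω) := by ring
      rw [h, max_zero_sub_max_neg_zero_eq_self]
    rw [this, integral_sub (integrable_const t) hX]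
    simp
  -- monotonicity
  have Gmono : ∀ s t : ℝ, s ≤ t → G s ≤ G t := by
    intro s t hst
    rw [hG, hG]
    exact integral_mono (intG s) (intG t) fun ω =>
      max_le_max (by linarith) le_rfl
  have Hmono : ∀ s t : ℝ, s ≤ t → H t ≤ H s := by
    intro s t hst
    rw [hH, hH]
    exact integral_mono (intH t) (intH s) fun ω =>
      max_le_max (by linarith) le_rfl
  set F : ℝ → ℝ := fun t => (1 - τ) * G t - τ * H t with hF
  set c : ℝ := min τ (1 - τ) with hc
  have hc0 : 0 < c := lt_min hτ0 (by linarith)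
  have hcτ : c ≤ τ := min_le_left _ _
  have hcτ' : c ≤ 1 - τ := min_le_right _ _
  -- key increment bounds
  have Fdiff : ∀ s t : ℝ, s ≤ t → c * (t - s) ≤ F t - F s ∧ F t - F s ≤ t - s := by
    intro s t hst
    have ha : 0 ≤ G t - G s := by have := Gmono s t hst; linarith
    have hb : 0 ≤ H s - H t := by have := Hmono s t hst; linarith
    have hab : (G t - G s) + (H s - H t) = t - s := by
      have h1 := GsubH s
      have h2 := GsubH t
      linarith
    constructor
    · simp only [hF]
      nlinarith [mul_le_mul_of_nonneg_right hcτ' ha, mul_le_mul_of_nonneg_right hcτ hb]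
    · simp only [hF]
      nlinarith [mul_le_mul_of_nonneg_right hτ1.le ha, mul_le_mul_of_nonneg_right hτ1.le hb,
        mul_nonneg hτ0.le hb, mul_nonneg (by linarith : (0:ℝ) ≤ 1 - τ) ha]
  -- F is Lipschitz hence continuous
  have hcont : Continuous F := by
    have hlip : LipschitzWith 1 F := by
      apply LipschitzWith.of_dist_le_mul
      intro s t
      rw [Real.dist_eq, Real.dist_eq, NNReal.coe_one, one_mul]
      rcases le_total s t with h | h
      · obtain ⟨h1, h2⟩ := Fdiff s t h
        have hd : 0 ≤ F t - F s :=
          le_trans (mul_nonneg hc0.le (by linarith)) h1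
        have habs : |s - t| = t - s := by
          rw [abs_of_nonpos (by linarith : s - t ≤ 0)]; ring
        rw [abs_le, habs]
        constructor <;> linarith
      · obtain ⟨h1, h2⟩ := Fdiff t s h
        have hd : 0 ≤ F s - F t :=
          le_trans (mul_nonneg hc0.le (by linarith)) h1
        have habs : |s - t| = s - t := abs_of_nonneg (by linarith)
        rw [abs_le, habs]
        constructor <;> linarith
    exact hlip.continuous
  -- find a root of F
  set M : ℝ := (|F 0| + 1) / c with hM
  have hM0 : 0 < M := by positivity
  have hFa : F (-M) ≤ -1 := by
    obtain ⟨h1, _⟩ := Fdiff (-M) 0 (by linarith)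
    have : c * M = |F 0| + 1 := by
      rw [hM]; field_simp
    have habs : F 0 ≤ |F 0| := le_abs_self _
    have h1' : c * (0 - (-M)) = c * M := by ring_nf
    nlinarith
  have hFb : 1 ≤ F M := by
    obtain ⟨h1, _⟩ := Fdiff 0 M (by linarith)
    have : c * M = |F 0| + 1 := by
      rw [hM]; field_simp
    have habs : -|F 0| ≤ F 0 := neg_abs_le _
    nlinarith
  have hsub : Set.Icc (F (-M)) (F M) ⊆ F '' Set.Icc (-M) M :=
    intermediate_value_Icc (by linarith) hcont.continuousOn
  obtain ⟨t, _, ht⟩ := hsub (show (0:ℝ) ∈ Set.Icc (F (-M)) (F M) from ⟨by linarith, by linarith⟩)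
  refine ⟨t, ?_, ?_⟩
  · have : F t = 0 := ht
    simp only [hF] at this
    linarith
  · intro s hs
    have hFs : F s = 0 := by simp only [hF]; linarith
    have hFt : F t = 0 := ht
    by_contra hne
    rcases lt_or_gt_of_ne hne with h | h
    · obtain ⟨h1, _⟩ := Fdiff s t h.le
      nlinarith
    · obtain ⟨h1, _⟩ := Fdiff t s h.le
      nlinarith
end

section
/- Let X be a real-valued integrable random variable that is not almost surely constant, and let τ₁, τ₂ ∈ (0,1) with τ₁ < τ₂. If t₁ is a τ₁-expectile of X and t₂ is a τ₂-expectile of X, then t₁ < t₂; i.e., the expectile function τ ↦ t(τ) is strictly increasing for nondegenerate X. -/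
open MeasureTheory

/-- For nondegenerate X, the expectile function is strictly
increasing in τ. -/
theorem expectile_strict_monotone
    {Ω : Type*} [MeasurableSpace Ω] (μ : Measure Ω) [IsProbabilityMeasure μ]
    (X : Ω → ℝ) (hX : Integrable X μ)
    (hnc : ¬ ∃ k : ℝ, X =ᵐ[μ] fun _ => k)
    (G H : ℝ → ℝ)
    (hG : ∀ t, G t = ∫ ω, max (t - X ω) 0 ∂μ)
    (hH : ∀ t, H t = ∫ ω, max (X ω - t) 0 ∂μ)
    (τ₁ τ₂ : ℝ) (hτ₁ : τ₁ ∈ Set.Ioo (0:ℝ) 1) (hτ₂ : τ₂ ∈ Set.Ioo (0:ℝ) 1)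
    (hττ : τ₁ < τ₂) (t₁ t₂ : ℝ)
    (h1 : (1 - τ₁) * G t₁ = τ₁ * H t₁)
    (h2 : (1 - τ₂) * G t₂ = τ₂ * H t₂) :
    t₁ < t₂ := by
  have intG : ∀ t : ℝ, Integrable (fun ω => max (t - X ω) 0) μ := fun t =>
    ((integrable_const t).sub hX).pos_part
  have intH : ∀ t : ℝ, Integrable (fun ω => max (X ω - t) 0) μ := fun t =>
    (hX.sub (integrable_const t)).pos_part
  have hGnn : ∀ t, 0 ≤ G t := fun t => by
    rw [hG]; exact integral_nonneg fun ω => le_max_right _ _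
  have hHnn : ∀ t, 0 ≤ H t := fun t => by
    rw [hH]; exact integral_nonneg fun ω => le_max_right _ _
  have hGmono : ∀ s t : ℝ, s ≤ t → G s ≤ G t := fun s t hst => by
    rw [hG, hG]
    exact integral_mono (intG s) (intG t) fun ω =>
      max_le_max (by linarith) le_rfl
  have hHmono : ∀ s t : ℝ, s ≤ t → H t ≤ H s := fun s t hst => by
    rw [hH, hH]
    exact integral_mono (intH t) (intH s) fun ω =>
      max_le_max (by linarith) le_rfl
  have hSpos : ∀ t, 0 < G t + H t := by
    intro t
    have heq : (fun ω => max (t - X ω) 0 + max (X ω - t) 0)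
        = fun ω => |X ω - t| := by
      funext ω
      rcases le_total (X ω) t with h | h
      · rw [abs_of_nonpos (by linarith), max_eq_left (by linarith),
          max_eq_right (by linarith)]
        ring
      · rw [abs_of_nonneg (by linarith), max_eq_right (by linarith),
          max_eq_left (by linarith)]
        ring
    have hsum : G t + H t = ∫ ω, |X ω - t| ∂μ := by
      rw [hG, hH, ← integral_add (intG t) (intH t), heq]
    have habs : Integrable (fun ω => |X ω - t|) μ := (hX.sub (integrable_const t)).abs
    have hnn : 0 ≤ ∫ ω, |X ω - t| ∂μ := integral_nonneg fun ω => abs_nonneg _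
    rcases lt_or_eq_of_le hnn with h | h
    · rw [hsum]; exact h
    · exfalso
      apply hnc
      refine ⟨t, ?_⟩
      have h0 : (fun ω => |X ω - t|) =ᵐ[μ] 0 :=
        (integral_eq_zero_iff_of_nonneg (fun ω => abs_nonneg _) habs).1 h.symm
      filter_upwards [h0] with ω hω
      have : |X ω - t| = 0 := hω
      have := abs_eq_zero.1 this
      simpa using by linarith
  by_contra hlt
  push_neg at hlt
  have hG21 : G t₂ ≤ G t₁ := hGmono _ _ hlt
  have hH12 : H t₁ ≤ H t₂ := hHmono _ _ hlt
  have hS1 := hSpos t₁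
  have hS2 := hSpos t₂
  have e1 : τ₁ * (G t₁ + H t₁) = G t₁ := by linarith [h1]
  have e2 : τ₂ * (G t₂ + H t₂) = G t₂ := by linarith [h2]
  have hcross : G t₂ * H t₁ ≤ G t₁ * H t₂ :=
    mul_le_mul hG21 hH12 (hHnn t₁) (hGnn t₁)
  nlinarith [mul_pos hS1 hS2, mul_lt_mul_of_pos_right hττ (mul_pos hS1 hS2)]
end
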